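/- Let λ be a partition of m and μ = (μ_1,…,μ_k) a composition of m. The number of semistandard Young tableaux of shape λ having exactly μ_i entries equal to i for each 1 ≤ i ≤ k (and no entries exceeding k) — the Kostka number K^λ_μ — equals the number of standard Young tableaux T of shape λ such that μ refines DesComp(T). -/

import Mathlib

/-!
Standardization numbers the cells of a semistandard tableau `1, …, m` in increasing order of
entry, equal entries from left to right. For weight `μ` the cells with entry `i` receive the
numbers in `(μ₁ + ⋯ + μ_{i-1}, μ₁ + ⋯ + μᵢ]`, so `Dmap μ` undoes it; and a descent `k` of the
standardization can only occur where the entry increases, that is at a partial sum of `μ`.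
Conversely, if every descent of a standard tableau `S` is a partial sum of `μ`, then within each
block `(μ₁ + ⋯ + μ_{i-1}, μ₁ + ⋯ + μᵢ]` the cells of `S` move weakly up and strictly right, so
`Dmap μ S` is column-strict of weight `μ` and standardizes back to `S`. Finally, `μ` refines
`DesComp(S)` exactly when every descent of `S` is a partial sum of `μ`, since the partial sums
of `DesComp(S)` are `0`, the descents, and `m`.
-/

open scoped Classical

namespace QC

/-- A filling assigns a natural-number entry to each cell `(i, j)`;
entries are `0` outside the shape. Values are 1-based. -/
abbrev Filling : Type := ℕ → ℕ → ℕ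

/-- The cell `(i, j)` (row `i`, column `j`, both 0-based) lies in the Young diagram of `lam`. -/
def InShape (lam : List ℕ) (i j : ℕ) : Prop :=
  i < lam.length ∧ j < lam.getD i 0

/-- The finite set of cells of the Young diagram of `lam`. -/
def cells (lam : List ℕ) : Finset (ℕ × ℕ) :=
  (Finset.range lam.length).biUnion fun i =>
    ({i} : Finset ℕ) ×ˢ Finset.range (lam.getD i 0)

/-- `lam` is a partition of `m`: weakly decreasing, positive parts, summing to `m`. -/
def IsPartitionOf (m : ℕ) (lam : List ℕ) : Prop :=
  lam.Pairwise (· ≥ ·) ∧ (∀ x ∈ lam, 0 < x) ∧ lam.sum = m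

/-- `a` is a composition of `m`: positive parts summing to `m`. -/
def IsCompositionOf (m : ℕ) (a : List ℕ) : Prop :=
  (∀ x ∈ a, 0 < x) ∧ a.sum = m

/-- `T` is a semistandard Young tableau of shape `lam`: positive entries on the shape,
zero off the shape, rows weakly increasing, columns strictly increasing. -/
def IsSSYT (lam : List ℕ) (T : Filling) : Prop :=
  (∀ i j, ¬ InShape lam i j → T i j = 0) ∧
  (∀ i j, InShape lam i j → 0 < T i j) ∧
  (∀ i j1 j2, j1 ≤ j2 → InShape lam i j2 → T i j1 ≤ T i j2) ∧
  (∀ i1 i2 j, i1 < i2 → InShape lam i2 j → T i1 j < T i2 j)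

/-- All entries of `T` are at most `n`. -/
def EntriesLE (n : ℕ) (T : Filling) : Prop := ∀ i j, T i j ≤ n

/-- `T` is a standard Young tableau of shape `lam ⊢ m`: a semistandard tableau in which
each of `1, …, m` appears exactly once. -/
def IsSYT (lam : List ℕ) (m : ℕ) (T : Filling) : Prop :=
  IsSSYT lam T ∧ EntriesLE m T ∧
    ∀ k, 1 ≤ k → k ≤ m → ∃! c : ℕ × ℕ, InShape lam c.1 c.2 ∧ T c.1 c.2 = k

/-- `k` is a descent of the standard tableau `T`: `k + 1` lies in a strictly lower row. -/
def IsDescent (lam : List ℕ) (T : Filling) (k : ℕ) : Prop :=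
  ∃ i1 j1 i2 j2, InShape lam i1 j1 ∧ InShape lam i2 j2 ∧
    T i1 j1 = k ∧ T i2 j2 = k + 1 ∧ i1 < i2

/-- The sorted list of descents of `T`, a standard tableau with `m` cells. -/
noncomputable def descentList (lam : List ℕ) (m : ℕ) (T : Filling) : List ℕ :=
  ((Finset.Ico 1 m).filter fun k => IsDescent lam T k).sort (· ≤ ·)

/-- The number of descents of `T`. -/
noncomputable def numDescents (lam : List ℕ) (m : ℕ) (T : Filling) : ℕ :=
  ((Finset.Ico 1 m).filter fun k => IsDescent lam T k).card

/-- The descent composition `(d₁, d₂ - d₁, …, m - d_{s-1})` of a standard tableau. -/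
noncomputable def desComp (lam : List ℕ) (m : ℕ) (T : Filling) : List ℕ :=
  if m = 0 then [] else
    List.zipWith (· - ·) (descentList lam m T ++ [m]) (0 :: descentList lam m T)

/-- The number of cells of `T` carrying the entry `v`. -/
def countEq (lam : List ℕ) (T : Filling) (v : ℕ) : ℕ :=
  ((cells lam).filter fun c => T c.1 c.2 = v).card

/-- The weight of `T` as a list `(γ₁, …, γₙ)`, `γᵢ` the number of entries equal to `i`. -/
def wt (lam : List ℕ) (n : ℕ) (T : Filling) : List ℕ :=
  (List.range n).map fun v => countEq lam T (v + 1)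

/-- The standardization of `T`: cells are relabelled `1, …, m` in order of increasing entry,
breaking ties between equal entries by increasing column index. -/
noncomputable def stdize (lam : List ℕ) (T : Filling) : Filling := fun i j =>
  if InShape lam i j then
    ((cells lam).filter fun c =>
      T c.1 c.2 < T i j ∨ (T c.1 c.2 = T i j ∧ c.2 ≤ j)).card
  else 0

/-- Given a weak composition `g`, `destValue g k` is the unique `i` with
`g₁ + ⋯ + g_{i-1} < k ≤ g₁ + ⋯ + g_i` (and `0` for `k = 0`). -/
def destValue (g : List ℕ) (k : ℕ) : ℕ :=
  ((List.range g.length).filter fun i => (g.take i).sum < k).length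

/-- The destandardization `D_g(T₀)`: each entry `j` of `T₀` is replaced by the unique `i`
with `g₁ + ⋯ + g_{i-1} < j ≤ g₁ + ⋯ + g_i`. -/
def Dmap (g : List ℕ) (T : Filling) : Filling := fun i j => destValue g (T i j)

/-- `Refines a b`: the composition `b` refines `a`, i.e. `b` can be cut into consecutive
blocks whose sums are the parts of `a` in order. -/
def Refines (a b : List ℕ) : Prop :=
  ∃ L : List (List ℕ), L.flatten = b ∧ L.map List.sum = a

/-- Strict lexicographic order on integer sequences. -/
def lexLt (a b : List ℕ) : Prop := List.Lex (· < ·) a b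

/-- Weak lexicographic order on integer sequences. -/
def lexLe (a b : List ℕ) : Prop := a = b ∨ lexLt a b

/-- The largest entry of `T`. -/
def maxEntry (lam : List ℕ) (T : Filling) : ℕ :=
  (cells lam).sup fun c => T c.1 c.2

/-- The weight of `T` (over all values), with zero parts deleted. -/
def wtFull (lam : List ℕ) (T : Filling) : List ℕ :=
  ((List.range (maxEntry lam T)).map fun v => countEq lam T (v + 1)).filter (· ≠ 0)

/-- The proper partial sums `α₁, α₁ + α₂, …, α₁ + ⋯ + α_{s-1}` of a composition. -/
def innerSums (a : List ℕ) : List ℕ :=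
  (List.range a.length).tail.map fun t => (a.take t).sum

/-- `f : Fin m → Fin n` encodes a sequence `1 ≤ i₁ ≤ i₂ ≤ … ≤ i_m ≤ n` (via `i_t = f (t-1) + 1`)
which ascends strictly, `i_j < i_{j+1}`, at every proper partial sum `j` of `a`. -/
def IsFWord (m n : ℕ) (a : List ℕ) (f : Fin m → Fin n) : Prop :=
  Monotone f ∧
    ∀ (t : ℕ) (ht : t + 1 < m), (t + 1) ∈ innerSums a →
      f ⟨t, Nat.lt_of_succ_lt ht⟩ < f ⟨t + 1, ht⟩

/-- The fundamental quasisymmetric polynomial `F_a(x₁, …, xₙ)` of degree `m`. -/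
noncomputable def Fpoly (m n : ℕ) (a : List ℕ) : MvPolynomial (Fin n) ℤ :=
  ∑ f ∈ Finset.univ.filter (fun f : Fin m → Fin n => IsFWord m n a f),
    ∏ t : Fin m, MvPolynomial.X (f t)

/-- The monomial `x₁^{γ₁} ⋯ xₙ^{γₙ}` of a tableau `T` of weight `γ`. -/
noncomputable def wtMonomial (lam : List ℕ) (n : ℕ) (T : Filling) :
    MvPolynomial (Fin n) ℤ :=
  ∏ i : Fin n, MvPolynomial.X i ^ countEq lam T (i.val + 1)

/-- `Rot` of a word `w` of length `k` on `{1, …, n}`: the `j`-th letter of `rot k n w`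
is `n + 1 - w_{k+1-j}` (1-based), here written 0-based. -/
def rot (k n : ℕ) (w : Fin k → ℕ) : Fin k → ℕ := fun j =>
  n + 1 - w ⟨k - 1 - j.val, by have := j.isLt; omega⟩

/-- The descent set of a word `w = w₁ ⋯ w_k`: positions `i ∈ {1, …, k-1}` with `wᵢ > w_{i+1}`
(1-based positions; `w ⟨i-1,_⟩` is `wᵢ`). -/
noncomputable def wordDes (k : ℕ) (w : Fin k → ℕ) : Finset ℕ :=
  (Finset.Ico 1 k).filter fun i =>
    ∃ (h1 : i - 1 < k) (h2 : i < k), w ⟨i, h2⟩ < w ⟨i - 1, h1⟩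

/-- The descent composition of a word of length `k`. -/
noncomputable def wordDesComp (k : ℕ) (w : Fin k → ℕ) : List ℕ :=
  if k = 0 then []
  else
    List.zipWith (· - ·) ((wordDes k w).sort (· ≤ ·) ++ [k])
      (0 :: (wordDes k w).sort (· ≤ ·))

section PartialSums

variable {g : List ℕ} {k v : ℕ}

lemma sum_take_le_sum (g : List ℕ) (v : ℕ) : (g.take v).sum ≤ g.sum :=
  List.sum_take_add_sum_drop g v ▸ Nat.le_add_right _ _

lemma destValue_le_length (g : List ℕ) (k : ℕ) : destValue g k ≤ g.length :=
  (List.length_filter_le _ _).trans_eq List.length_range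

lemma destValue_mono (g : List ℕ) : Monotone (destValue g) := fun _ _ hk =>
  (List.monotone_filter_right _ fun _ hi => by simp_all only [decide_eq_true_eq]; omega).length_le

lemma destValue_le_iff (hk : k ≤ g.sum) : destValue g k ≤ v ↔ k ≤ (g.take v).sum := by
  constructor
  · intro hle
    by_contra! hlt
    have hv : v < g.length := by
      by_contra! hv
      rw [List.take_of_length_le hv] at hlt
      omega
    have hall : (List.range (v + 1)).filter (fun i => (g.take i).sum < k) = List.range (v + 1) :=
      List.filter_eq_self.mpr fun i hi => by
        have : (g.take i).sum ≤ (g.take v).sum :=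
          List.monotone_sum_take g (Nat.lt_succ_iff.mp (List.mem_range.mp hi))
        simp only [decide_eq_true_eq]; omega
    have := ((List.range_sublist.mpr hv).filter (fun i => (g.take i).sum < k)).length_le
    rw [hall, List.length_range] at this
    exact absurd hle (by rw [destValue]; omega)
  · intro hkv
    have hsub : (List.range g.length).filter (fun i => (g.take i).sum < k) ⊆ List.range v :=
      fun i hi => by
        simp only [List.mem_filter, List.mem_range, decide_eq_true_eq] at hi ⊢
        by_contra! hvi
        have : (g.take v).sum ≤ (g.take i).sum := List.monotone_sum_take g hvi
        omega
    simpa [destValue] using (((List.nodup_range).filter _).subperm hsub).length_le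

lemma destValue_eq_iff (hk : k ≤ g.sum) (hv : 1 ≤ v) :
    destValue g k = v ↔ (g.take (v - 1)).sum < k ∧ k ≤ (g.take v).sum := by
  rw [← destValue_le_iff hk, ← not_le, ← destValue_le_iff hk]
  omega

lemma destValue_zero (g : List ℕ) : destValue g 0 = 0 :=
  Nat.le_zero.mp ((destValue_le_iff (Nat.zero_le _)).mpr (Nat.zero_le _))

lemma one_le_destValue (hk1 : 1 ≤ k) (hk : k ≤ g.sum) : 1 ≤ destValue g k := by
  by_contra! h
  have := (destValue_le_iff hk (v := 0)).mp (by omega)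
  simp at this; omega

lemma destValue_lt_destValue {s a b : ℕ} (ha : a ≤ (g.take s).sum) (hb : (g.take s).sum < b)
    (hbg : b ≤ g.sum) : destValue g a < destValue g b :=
  calc destValue g a ≤ s := (destValue_le_iff (ha.trans (sum_take_le_sum g s))).mpr ha
    _ < destValue g b := not_le.mp fun h => hb.not_ge ((destValue_le_iff hbg).mp h)

end PartialSums

section Refinement

lemma Refines.range_sum_take_subset {a b : List ℕ} (h : Refines a b) :
    Set.range (fun t => (a.take t).sum) ⊆ Set.range (fun s => (b.take s).sum) := by
  obtain ⟨L, rfl, rfl⟩ := h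
  rintro _ ⟨t, rfl⟩
  refine ⟨(L.take t).flatten.length, ?_⟩
  have : L.flatten = (L.take t).flatten ++ (L.drop t).flatten := by
    rw [← List.flatten_append, List.take_append_drop]
  simp only
  rw [this, List.take_left' rfl, List.sum_flatten, ← List.map_take]

lemma refines_of_range_sum_take_subset :
    ∀ {a b : List ℕ}, (∀ x ∈ b, 0 < x) → a.sum = b.sum →
    Set.range (fun t => (a.take t).sum) ⊆ Set.range (fun s => (b.take s).sum) → Refines a b
  | [], b, hb, hab, _ => by
    obtain rfl : b = [] := List.eq_nil_iff_forall_not_mem.mpr fun x hx => by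
      have := List.le_sum_of_mem hx
      have := hb x hx
      simp at hab; omega
    exact ⟨[], rfl, rfl⟩
  | x :: a, b, hb, hab, hsub => by
    obtain ⟨s, hs⟩ := hsub ⟨1, rfl⟩
    simp only [List.take_succ_cons, List.take_zero, List.sum_cons, List.sum_nil] at hs
    have hsplit := List.sum_take_add_sum_drop b s
    obtain ⟨L, hL, hLs⟩ : Refines a (b.drop s) := by
      refine refines_of_range_sum_take_subset (fun y hy => hb y (List.mem_of_mem_drop hy))
        (by simp at hab; omega) ?_
      rintro _ ⟨t, rfl⟩
      obtain ⟨s', hs'⟩ := hsub ⟨t + 1, rfl⟩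
      simp only [List.take_succ_cons, List.sum_cons] at hs'
      rcases le_or_gt s s' with hss' | hs's
      · refine ⟨s' - s, ?_⟩
        rw [← Nat.add_sub_cancel' hss', List.take_add, List.sum_append] at hs'
        simp only; omega
      · refine ⟨0, ?_⟩
        have : (b.take s').sum ≤ (b.take s).sum := List.monotone_sum_take b hs's.le
        simp only [List.take_zero, List.sum_nil]; omega
    exact ⟨b.take s :: L, by simp [hL], by simp [hLs, hs]⟩

lemma refines_iff_range_sum_take_subset {a b : List ℕ} (hb : ∀ x ∈ b, 0 < x)
    (hab : a.sum = b.sum) :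
    Refines a b ↔ Set.range (fun t => (a.take t).sum) ⊆ Set.range (fun s => (b.take s).sum) :=
  ⟨Refines.range_sum_take_subset, refines_of_range_sum_take_subset hb hab⟩

end Refinement

section DescentComposition

variable {lam : List ℕ} {m : ℕ} {T : Filling}

lemma mem_descentList {k : ℕ} :
    k ∈ descentList lam m T ↔ (1 ≤ k ∧ k < m) ∧ IsDescent lam T k := by
  rw [descentList, Finset.mem_sort, Finset.mem_filter, Finset.mem_Ico]

lemma sum_take_zipWith_sub :
    ∀ (l : List ℕ) {c x : ℕ}, (c :: l ++ [x]).Pairwise (· ≤ ·) → ∀ t,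
      c + ((List.zipWith (· - ·) (l ++ [x]) (c :: l)).take t).sum =
        (c :: l ++ [x]).getD t x
  | [], c, x, hsort, t => by
    have : c ≤ x := List.rel_of_pairwise_cons hsort (by simp)
    rcases t with _ | _ | t <;> simp <;> omega
  | y :: l, c, x, hsort, t => by
    have hcy : c ≤ y := List.rel_of_pairwise_cons hsort (by simp)
    rcases t with _ | t
    · simp
    · have := sum_take_zipWith_sub l (List.Pairwise.of_cons hsort) t
      simp only [List.cons_append, List.zipWith_cons_cons, List.take_succ_cons, List.sum_cons,
        List.getD_cons_succ] at this ⊢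
      omega

lemma pairwise_descentList : (0 :: descentList lam m T ++ [m]).Pairwise (· ≤ ·) := by
  have hD : ∀ d ∈ descentList lam m T, 1 ≤ d ∧ d < m := fun _ hd =>
    (mem_descentList.mp hd).1
  refine List.pairwise_append.mpr ⟨List.pairwise_cons.mpr ⟨fun _ _ => Nat.zero_le _,
    Finset.pairwise_sort _ _⟩, List.pairwise_singleton _ _, ?_⟩
  simp only [List.mem_cons, List.not_mem_nil, or_false]
  rintro a (rfl | ha) b rfl
  exacts [Nat.zero_le _, (hD a ha).2.le]

lemma sum_take_desComp (t : ℕ) :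
    ((desComp lam m T).take t).sum = (0 :: descentList lam m T ++ [m]).getD t m := by
  rcases Nat.eq_zero_or_pos m with rfl | hm
  · rcases t with _ | _ | t <;> simp [desComp, descentList]
  · simpa [desComp, hm.ne'] using sum_take_zipWith_sub _ pairwise_descentList t

lemma sum_desComp : (desComp lam m T).sum = m := by
  have := sum_take_desComp (lam := lam) (T := T) (m := m)
    ((desComp lam m T).length + (descentList lam m T).length + 2)
  rwa [List.take_of_length_le (by omega), List.getD_eq_default _ _ (by simp)] at this

lemma range_sum_take_desComp :
    Set.range (fun t => ((desComp lam m T).take t).sum) =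
      {x | x ∈ 0 :: descentList lam m T ++ [m]} := by
  ext x
  simp only [Set.mem_range, Set.mem_ofPred_eq, sum_take_desComp]
  constructor
  · rintro ⟨t, rfl⟩
    rcases lt_or_ge t (0 :: descentList lam m T ++ [m]).length with ht | ht
    · exact List.getD_eq_getElem _ _ ht ▸ List.getElem_mem ht
    · rw [List.getD_eq_default _ _ ht]; simp
  · intro hx
    obtain ⟨t, ht, rfl⟩ := List.getElem_of_mem hx
    exact ⟨t, List.getD_eq_getElem _ _ ht⟩

lemma refines_desComp_iff {mu : List ℕ} (hmu : ∀ x ∈ mu, 0 < x) (hsum : mu.sum = m) :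
    Refines (desComp lam m T) mu ↔
      ∀ d, 1 ≤ d → d < m → IsDescent lam T d → ∃ s, (mu.take s).sum = d := by
  rw [refines_iff_range_sum_take_subset hmu (sum_desComp.trans hsum.symm),
    range_sum_take_desComp]
  have h0 : ∃ s, (mu.take s).sum = 0 := ⟨0, rfl⟩
  have hm : ∃ s, (mu.take s).sum = m := ⟨mu.length, by rw [List.take_length, hsum]⟩
  simp only [Set.ofPred_subset, Set.mem_range, List.mem_append, List.mem_cons, List.not_mem_nil,
    or_false]
  constructor
  · intro h d hd1 hd2 hd
    exact h d (Or.inl (Or.inr (mem_descentList.mpr ⟨⟨hd1, hd2⟩, hd⟩)))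
  · rintro h x ((rfl | hx) | rfl)
    · exact h0
    · obtain ⟨⟨hx1, hx2⟩, hx⟩ := mem_descentList.mp hx
      exact h x hx1 hx2 hx
    · exact hm

end DescentComposition

section Rank

open Finset

variable {α β γ : Type*} [LinearOrder β] [LinearOrder γ] {s : Finset α} {f : α → β}
  {a b : α}

def rank (s : Finset α) (f : α → β) (a : α) : ℕ := #{x ∈ s | f x ≤ f a}

lemma card_filter_le_succ (s : Finset α) (f : α → ℕ) (v : ℕ) :
    #{x ∈ s | f x ≤ v + 1} = #{x ∈ s | f x ≤ v} + #{x ∈ s | f x = v + 1} := by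
  classical
  rw [← card_union_of_disjoint (disjoint_filter.mpr fun _ _ h h' => by omega), ← filter_or]
  exact congrArg card (filter_congr fun _ _ => by omega)

lemma rank_mono (h : f a ≤ f b) : rank s f a ≤ rank s f b :=
  card_le_card (monotone_filter_right _ fun _ _ hx => hx.trans h)

lemma rank_lt_rank (hb : b ∈ s) (h : f a < f b) : rank s f a < rank s f b := by
  refine card_lt_card ((ssubset_iff_of_subset
    (monotone_filter_right _ fun _ _ hx => hx.trans h.le)).mpr ⟨b, ?_, ?_⟩)
  · simpa using hb
  · simpa using fun _ => h

lemma rank_pos (ha : a ∈ s) : 0 < rank s f a :=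
  card_pos.mpr ⟨a, by simpa using ha⟩

lemma rank_le_card (s : Finset α) (f : α → β) (a : α) : rank s f a ≤ #s :=
  card_filter_le _ _

lemma injOn_rank (hf : Set.InjOn f s) : Set.InjOn (rank s f) s := fun a ha b hb hab => by
  by_contra hne
  rcases (hf.ne ha hb hne).lt_or_gt with h | h
  · exact (rank_lt_rank hb h).ne hab
  · exact (rank_lt_rank ha h).ne' hab

lemma image_rank (hf : Set.InjOn f s) : s.image (rank s f) = Icc 1 #s := by
  refine eq_of_subset_of_card_le (fun k hk => ?_) ?_
  · obtain ⟨a, ha, rfl⟩ := mem_image.mp hk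
    exact mem_Icc.mpr ⟨rank_pos ha, rank_le_card s f a⟩
  · rw [card_image_of_injOn (injOn_rank hf), Nat.card_Icc, Nat.add_sub_cancel]

lemma card_filter_le_of_image_eq_Icc {g : α → ℕ} {n k : ℕ} (hg : Set.InjOn g s)
    (himage : s.image g = Icc 1 n) (hk : k ≤ n) : #{x ∈ s | g x ≤ k} = k := by
  rw [← card_image_of_injOn (hg.mono (filter_subset _ _)), ← filter_image (p := (· ≤ k)),
    himage, show {x ∈ Icc 1 n | x ≤ k} = Icc 1 k by ext; simp; omega, Nat.card_Icc,
    Nat.add_sub_cancel]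

lemma rank_eq_of_image_eq_Icc {g : α → ℕ} {n : ℕ} (hg : Set.InjOn g s)
    (himage : s.image g = Icc 1 n) (ha : a ∈ s) : rank s g a = g a :=
  card_filter_le_of_image_eq_Icc hg himage <|
    (mem_Icc.mp (himage ▸ mem_image_of_mem g ha)).2

lemma rank_eq_rank_of_lt_imp_lt {g : α → γ} (hg : Set.InjOn g s)
    (hfg : ∀ x ∈ s, ∀ y ∈ s, g x < g y → f x < f y) (ha : a ∈ s) :
    rank s f a = rank s g a := by
  refine congrArg card (filter_congr fun x hx => ⟨fun h => ?_, fun h => ?_⟩)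
  · by_contra! hlt
    exact h.not_gt (hfg a ha x hx hlt)
  · rcases h.lt_or_eq with hlt | heq
    · exact (hfg x hx a ha hlt).le
    · rw [hg hx ha heq]

end Rank

section Tableaux

open Finset

variable {lam : List ℕ} {m : ℕ} {T : Filling}

lemma mem_cells {c : ℕ × ℕ} : c ∈ cells lam ↔ InShape lam c.1 c.2 := by
  obtain ⟨i, j⟩ := c
  simp [cells, InShape, and_comm]

lemma card_cells (lam : List ℕ) : #(cells lam) = lam.sum := by
  rw [cells, card_biUnion fun i _ i' _ hii' =>
    disjoint_product.mpr (Or.inl (disjoint_singleton.mpr hii'))]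
  simp only [card_product, card_singleton, one_mul, card_range]
  rw [sum_range fun i => lam.getD i 0, ← Fin.sum_univ_getElem]
  exact sum_congr rfl fun i _ => List.getD_eq_getElem _ _ i.2

lemma inShape_of_le_row (hsort : lam.Pairwise (· ≥ ·)) {i1 i2 j : ℕ}
    (h : InShape lam i2 j) (hi : i1 ≤ i2) : InShape lam i1 j := by
  obtain ⟨hlen, hj⟩ := h
  rcases hi.lt_or_eq with hlt | rfl
  · refine ⟨hlt.trans hlen, hj.trans_le ?_⟩
    rw [List.getD_eq_getElem _ _ (hlt.trans hlen), List.getD_eq_getElem _ _ hlen]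
    exact List.pairwise_iff_getElem.mp hsort i1 i2 _ hlen hlt
  · exact ⟨hlen, hj⟩

lemma inShape_of_le_col {i j1 j2 : ℕ} (h : InShape lam i j2) (hj : j1 ≤ j2) :
    InShape lam i j1 :=
  ⟨h.1, lt_of_le_of_lt hj h.2⟩

namespace IsSSYT

lemma le_of_le_of_le (hT : IsSSYT lam T) {i1 j1 i2 j2 : ℕ} (h2 : InShape lam i2 j2)
    (hi : i1 ≤ i2) (hj : j1 ≤ j2) : T i1 j1 ≤ T i2 j2 := by
  have hrow := hT.2.2.1 i2 j1 j2 hj h2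
  rcases hi.lt_or_eq with hlt | rfl
  · exact (hT.2.2.2 i1 i2 j1 hlt (inShape_of_le_col h2 hj)).le.trans hrow
  · exact hrow

lemma row_le_of_eq_of_col_lt (hT : IsSSYT lam T) {i1 j1 i2 j2 : ℕ} (h2 : InShape lam i2 j2)
    (heq : T i1 j1 = T i2 j2) (hj : j1 < j2) : i2 ≤ i1 := by
  by_contra! hi
  have := hT.2.2.2 i1 i2 j1 hi (inShape_of_le_col h2 hj.le)
  have := hT.2.2.1 i2 j1 j2 hj.le h2
  omega

lemma injOn_entry_col (hT : IsSSYT lam T) :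
    Set.InjOn (fun c : ℕ × ℕ => (T c.1 c.2, c.2)) (cells lam) := by
  rintro ⟨i1, j⟩ h1 ⟨i2, j'⟩ h2 heq
  simp only [Prod.mk.injEq] at heq
  obtain ⟨heq, rfl⟩ := heq
  rcases lt_trichotomy i1 i2 with hi | rfl | hi
  · exact absurd heq (hT.2.2.2 i1 i2 j hi (mem_cells.mp h2)).ne
  · rfl
  · exact absurd heq (hT.2.2.2 i2 i1 j hi (mem_cells.mp h1)).ne'

lemma card_filter_le_eq_sum_take (hT : IsSSYT lam T) {mu : List ℕ}
    (hwt : wt lam mu.length T = mu) {v : ℕ} (hv : v ≤ mu.length) :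
    #{c ∈ cells lam | T c.1 c.2 ≤ v} = (mu.take v).sum := by
  induction v with
  | zero =>
    refine card_eq_zero.mpr (filter_eq_empty_iff.mpr fun c hc => ?_)
    have := hT.2.1 c.1 c.2 (mem_cells.mp hc)
    omega
  | succ v ih =>
    have hcount : countEq lam T (v + 1) = mu[v] := by
      have hv' : v < (wt lam mu.length T).length := by simp [wt]; omega
      simpa [wt] using List.getElem_of_eq hwt hv'
    rw [List.sum_take_succ _ _ (by omega), ← ih (by omega), ← hcount, countEq,
      card_filter_le_succ]

end IsSSYT

lemma isSYT_iff (hT : IsSSYT lam T) :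
    IsSYT lam m T ↔ Set.InjOn (fun c : ℕ × ℕ => T c.1 c.2) (cells lam) ∧
      (cells lam).image (fun c : ℕ × ℕ => T c.1 c.2) = Icc 1 m := by
  constructor
  · rintro ⟨-, hle, huniq⟩
    refine ⟨fun c hc d hd hcd => ?_, ?_⟩
    · have hd' := mem_cells.mp hd
      obtain ⟨e, -, he⟩ := huniq _ (hT.2.1 _ _ hd') (hle _ _)
      exact (he c ⟨mem_cells.mp hc, hcd⟩).trans (he d ⟨hd', rfl⟩).symm
    · ext k
      simp only [mem_image, mem_Icc]
      constructor
      · rintro ⟨c, hc, rfl⟩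
        exact ⟨hT.2.1 _ _ (mem_cells.mp hc), hle _ _⟩
      · rintro ⟨hk1, hk2⟩
        obtain ⟨c, ⟨hc, hck⟩, -⟩ := huniq k hk1 hk2
        exact ⟨c, mem_cells.mpr hc, hck⟩
  · rintro ⟨hinj, himage⟩
    have hmem : ∀ c ∈ cells lam, T c.1 c.2 ∈ Icc 1 m := fun c hc =>
      himage ▸ mem_image_of_mem _ hc
    refine ⟨hT, fun i j => ?_, fun k hk1 hk2 => ?_⟩
    · by_cases h : InShape lam i j
      · exact (mem_Icc.mp (hmem (i, j) (mem_cells.mpr h))).2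
      · rw [hT.1 i j h]; exact Nat.zero_le _
    · obtain ⟨c, hc, hck⟩ := mem_image.mp (himage ▸ mem_Icc.mpr ⟨hk1, hk2⟩ : k ∈ _)
      exact ⟨c, ⟨mem_cells.mp hc, hck⟩, fun d hd =>
        hinj (mem_cells.mpr hd.1) hc (hd.2.trans hck.symm)⟩

end Tableaux

section Standardization

open Finset

variable {lam : List ℕ} {m : ℕ} {T : Filling} {mu : List ℕ}

def stdKey (T : Filling) (c : ℕ × ℕ) : ℕ ×ₗ ℕ := toLex (T c.1 c.2, c.2)

lemma entry_le_of_stdKey_le {c d : ℕ × ℕ} (h : stdKey T c ≤ stdKey T d) :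
    T c.1 c.2 ≤ T d.1 d.2 := by
  rcases Prod.Lex.toLex_le_toLex.mp h with h | ⟨h, -⟩
  exacts [h.le, h.le]

lemma stdKey_lt_of_entry_lt {c d : ℕ × ℕ} (h : T c.1 c.2 < T d.1 d.2) :
    stdKey T c < stdKey T d :=
  Prod.Lex.toLex_lt_toLex.mpr (Or.inl h)

lemma stdize_of_inShape {i j : ℕ} (h : InShape lam i j) :
    stdize lam T i j = rank (cells lam) (stdKey T) (i, j) := by
  simp only [stdize, if_pos h, rank, stdKey, Prod.Lex.toLex_le_toLex]

lemma stdize_of_not_inShape {i j : ℕ} (h : ¬ InShape lam i j) : stdize lam T i j = 0 :=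
  if_neg h

namespace IsSSYT

lemma injOn_stdKey (hT : IsSSYT lam T) : Set.InjOn (stdKey T) (cells lam) :=
  toLex.injective.comp_injOn hT.injOn_entry_col

lemma isSYT_stdize (hsort : lam.Pairwise (· ≥ ·)) (hT : IsSSYT lam T) (hsum : lam.sum = m) :
    IsSYT lam m (stdize lam T) := by
  have hrank : ∀ c ∈ cells lam, stdize lam T c.1 c.2 = rank (cells lam) (stdKey T) c :=
    fun c hc => stdize_of_inShape (mem_cells.mp hc)
  have hSSYT : IsSSYT lam (stdize lam T) := by
    refine ⟨fun i j h => stdize_of_not_inShape h, fun i j h => ?_, fun i j1 j2 hj h2 => ?_,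
      fun i1 i2 j hi h2 => ?_⟩
    · rw [stdize_of_inShape h]; exact rank_pos (mem_cells.mpr h)
    · have h1 := inShape_of_le_col h2 hj
      rw [stdize_of_inShape h1, stdize_of_inShape h2]
      refine rank_mono (Prod.Lex.toLex_le_toLex.mpr ?_)
      rcases (hT.2.2.1 i j1 j2 hj h2).lt_or_eq with hlt | heq
      exacts [Or.inl hlt, Or.inr ⟨heq, hj⟩]
    · rw [stdize_of_inShape (inShape_of_le_row hsort h2 hi.le), stdize_of_inShape h2]
      exact rank_lt_rank (mem_cells.mpr h2) (stdKey_lt_of_entry_lt (hT.2.2.2 i1 i2 j hi h2))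
  refine (isSYT_iff hSSYT).mpr ⟨fun c hc d hd hcd => ?_, ?_⟩
  · simp only [hrank c hc, hrank d hd] at hcd
    exact injOn_rank hT.injOn_stdKey hc hd hcd
  · rw [← hsum, ← card_cells, ← image_rank hT.injOn_stdKey]
    exact image_congr fun c hc => hrank c hc

lemma exists_sum_take_eq_of_isDescent_stdize (hT : IsSSYT lam T)
    (hwt : wt lam mu.length T = mu) (hle : EntriesLE mu.length T) {k : ℕ}
    (hdes : IsDescent lam (stdize lam T) k) : ∃ s, (mu.take s).sum = k := by
  obtain ⟨i1, j1, i2, j2, h1, h2, hk, hk', hrow⟩ := hdes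
  rw [stdize_of_inShape h1] at hk
  rw [stdize_of_inShape h2] at hk'
  have hkey : stdKey T (i1, j1) < stdKey T (i2, j2) := lt_of_not_ge fun h => by
    have := rank_mono (s := cells lam) h
    omega
  have hlt : T i1 j1 < T i2 j2 := by
    rcases Prod.Lex.toLex_lt_toLex.mp hkey with h | ⟨heq, hj⟩
    · exact h
    · exact absurd (hT.row_le_of_eq_of_col_lt h2 heq hj) (not_le.mpr hrow)
  -- no key lies strictly between those of two cells of consecutive ranks
  have hfilter : {c ∈ cells lam | stdKey T c ≤ stdKey T (i1, j1)} =
      {c ∈ cells lam | T c.1 c.2 ≤ T i1 j1} := by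
    refine filter_congr fun c hc => ⟨entry_le_of_stdKey_le, fun h => ?_⟩
    by_contra! hgt
    have := rank_lt_rank hc hgt
    have := rank_lt_rank (mem_cells.mpr h2) (stdKey_lt_of_entry_lt (T := T) (c := c)
      (d := (i2, j2)) (h.trans_lt hlt))
    omega
  refine ⟨T i1 j1, ?_⟩
  rw [← hT.card_filter_le_eq_sum_take hwt (hle i1 j1), ← hfilter]
  exact hk

lemma dmap_stdize (hT : IsSSYT lam T) (hwt : wt lam mu.length T = mu)
    (hle : EntriesLE mu.length T) : Dmap mu (stdize lam T) = T := by
  funext i j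
  by_cases h : InShape lam i j
  swap
  · rw [Dmap, stdize_of_not_inShape h, destValue_zero, hT.1 i j h]
  have hv1 : 1 ≤ T i j := hT.2.1 i j h
  have hv : T i j ≤ mu.length := hle i j
  have hupper : rank (cells lam) (stdKey T) (i, j) ≤ (mu.take (T i j)).sum := by
    rw [← hT.card_filter_le_eq_sum_take hwt hv]
    exact card_le_card (monotone_filter_right _ fun c _ => entry_le_of_stdKey_le)
  have hlower : (mu.take (T i j - 1)).sum < rank (cells lam) (stdKey T) (i, j) := by
    rw [← hT.card_filter_le_eq_sum_take hwt (by omega)]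
    refine card_lt_card ((ssubset_iff_of_subset (monotone_filter_right _ fun c _ hc => ?_)).mpr
      ⟨(i, j), by simpa using mem_cells.mpr h, by simpa using fun _ => hT.2.1 i j h⟩)
    exact (stdKey_lt_of_entry_lt (by simp only at hc ⊢; omega)).le
  rw [Dmap, stdize_of_inShape h]
  exact (destValue_eq_iff (hupper.trans (sum_take_le_sum _ _)) hv1).mpr ⟨hlower, hupper⟩

end IsSSYT

end Standardization

section Destandardization

open Finset

variable {lam : List ℕ} {m : ℕ} {S : Filling} {mu : List ℕ}

lemma IsSSYT.col_lt_of_eq_succ (hS : IsSSYT lam S) {c e : ℕ × ℕ} (hc : InShape lam c.1 c.2)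
    (he : InShape lam e.1 e.2) (hce : S e.1 e.2 = S c.1 c.2 + 1)
    (hnd : ¬ IsDescent lam S (S c.1 c.2)) : c.2 < e.2 := by
  have hrow : e.1 ≤ c.1 := not_lt.mp fun h => hnd ⟨c.1, c.2, e.1, e.2, hc, he, rfl, hce, h⟩
  by_contra! hcol
  have := hS.le_of_le_of_le hc hrow hcol
  omega

namespace IsSYT

lemma col_lt_of_forall_not_isDescent (hS : IsSYT lam m S) {c e : ℕ × ℕ}
    (hc : InShape lam c.1 c.2) (he : InShape lam e.1 e.2) (hlt : S c.1 c.2 < S e.1 e.2)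
    (hnd : ∀ d, S c.1 c.2 ≤ d → d < S e.1 e.2 → ¬ IsDescent lam S d) : c.2 < e.2 := by
  obtain ⟨n, hn⟩ := Nat.exists_eq_add_of_lt hlt
  induction n generalizing e with
  | zero => exact hS.1.col_lt_of_eq_succ hc he hn (hnd _ le_rfl (by omega))
  | succ n ih =>
    have hem := hS.2.1 e.1 e.2
    obtain ⟨f, ⟨hf, hfn⟩, -⟩ := hS.2.2 (S c.1 c.2 + n + 1) (by omega) (by omega)
    exact (ih hf (by omega) (fun d h1 h2 => hnd d h1 (by omega)) hfn).trans
      (hS.1.col_lt_of_eq_succ hf he (by omega) (hnd _ (by omega) (by omega)))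

lemma col_lt_of_destValue_eq (hS : IsSYT lam m S) (hsum : mu.sum = m)
    (hdes : ∀ d, 1 ≤ d → d < m → IsDescent lam S d → ∃ s, (mu.take s).sum = d)
    {c e : ℕ × ℕ} (hc : InShape lam c.1 c.2) (he : InShape lam e.1 e.2)
    (hlt : S c.1 c.2 < S e.1 e.2)
    (heq : destValue mu (S c.1 c.2) = destValue mu (S e.1 e.2)) : c.2 < e.2 := by
  refine hS.col_lt_of_forall_not_isDescent hc he hlt fun d hd1 hd2 hd => ?_
  have := hS.1.2.1 _ _ hc
  have := hS.2.1 e.1 e.2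
  obtain ⟨s, rfl⟩ := hdes d (by omega) (by omega) hd
  exact (destValue_lt_destValue hd1 hd2 (by omega)).ne heq

lemma isSSYT_dmap (hsort : lam.Pairwise (· ≥ ·)) (hS : IsSYT lam m S) (hsum : mu.sum = m)
    (hdes : ∀ d, 1 ≤ d → d < m → IsDescent lam S d → ∃ s, (mu.take s).sum = d) :
    IsSSYT lam (Dmap mu S) := by
  refine ⟨fun i j h => ?_, fun i j h => ?_, fun i j1 j2 hj h2 => ?_, fun i1 i2 j hi h2 => ?_⟩
  · rw [Dmap, hS.1.1 i j h, destValue_zero]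
  · exact one_le_destValue (hS.1.2.1 i j h) (hsum ▸ hS.2.1 i j)
  · exact destValue_mono mu (hS.1.2.2.1 i j1 j2 hj h2)
  · have hlt := hS.1.2.2.2 i1 i2 j hi h2
    refine (destValue_mono mu hlt.le).lt_of_ne fun heq => ?_
    exact (hS.col_lt_of_destValue_eq hsum hdes (c := (i1, j)) (e := (i2, j))
      (inShape_of_le_row hsort h2 hi.le) h2 hlt heq).false

lemma card_filter_dmap_le (hS : IsSYT lam m S) (hsum : mu.sum = m) (v : ℕ) :
    #{c ∈ cells lam | Dmap mu S c.1 c.2 ≤ v} = (mu.take v).sum := by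
  obtain ⟨hinj, himage⟩ := (isSYT_iff hS.1).mp hS
  rw [← card_filter_le_of_image_eq_Icc (k := (mu.take v).sum) hinj himage
    (hsum ▸ sum_take_le_sum mu v)]
  exact congrArg card (filter_congr fun c _ => destValue_le_iff (hsum ▸ hS.2.1 _ _))

lemma wt_dmap (hS : IsSYT lam m S) (hsum : mu.sum = m) :
    wt lam mu.length (Dmap mu S) = mu := by
  refine List.ext_getElem (by simp [wt]) fun v _ hv => ?_
  have := card_filter_le_succ (cells lam) (fun c => Dmap mu S c.1 c.2) v
  rw [card_filter_dmap_le hS hsum, card_filter_dmap_le hS hsum, List.sum_take_succ _ _ hv]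
    at this
  simp only [wt, List.getElem_map, List.getElem_range, countEq]
  omega

lemma stdize_dmap (hS : IsSYT lam m S) (hsum : mu.sum = m)
    (hdes : ∀ d, 1 ≤ d → d < m → IsDescent lam S d → ∃ s, (mu.take s).sum = d) :
    stdize lam (Dmap mu S) = S := by
  obtain ⟨hinj, himage⟩ := (isSYT_iff hS.1).mp hS
  funext i j
  by_cases h : InShape lam i j
  swap
  · rw [stdize_of_not_inShape h, hS.1.1 i j h]
  rw [stdize_of_inShape h, rank_eq_rank_of_lt_imp_lt hinj ?_ (mem_cells.mpr h),
    rank_eq_of_image_eq_Icc hinj himage (mem_cells.mpr h)]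
  intro c hc e he hlt
  rw [stdKey, stdKey, Prod.Lex.toLex_lt_toLex]
  rcases (destValue_mono mu hlt.le).lt_or_eq with hD | hD
  · exact Or.inl hD
  · exact Or.inr ⟨hD, hS.col_lt_of_destValue_eq hsum hdes (c := c) (e := e) (mem_cells.mp hc)
      (mem_cells.mp he) hlt hD⟩

end IsSYT

end Destandardization

/-- The Kostka number `K^lam_mu`, counting semistandard Young tableaux of shape `lam ⊢ m`
with exactly `muᵢ` entries equal to `i` (and no entries exceeding the length of `mu`),
equals the number of standard Young tableaux `T` of shape `lam` such that `mu` refines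
the descent composition of `T`. -/
theorem kostka_eq_card_syt_with_refining_descomp (m : ℕ) (lam : List ℕ)
    (hlam : IsPartitionOf m lam) (mu : List ℕ) (hmu : IsCompositionOf m mu) :
    Nat.card {T : Filling // IsSSYT lam T ∧ EntriesLE mu.length T ∧
        wt lam mu.length T = mu} =
      Nat.card {T : Filling // IsSYT lam m T ∧ Refines (desComp lam m T) mu} := by
  obtain ⟨hsort, -, hlsum⟩ := hlam
  obtain ⟨hpos, hsum⟩ := hmu
  have hdes {S : Filling} (hS : Refines (desComp lam m S) mu) :=
    (refines_desComp_iff hpos hsum).mp hS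
  exact Nat.card_congr
    { toFun := fun T => ⟨stdize lam T.1, T.2.1.isSYT_stdize hsort hlsum,
        (refines_desComp_iff hpos hsum).mpr fun _ _ _ hd =>
          T.2.1.exists_sum_take_eq_of_isDescent_stdize T.2.2.2 T.2.2.1 hd⟩
      invFun := fun S => ⟨Dmap mu S.1, S.2.1.isSSYT_dmap hsort hsum (hdes S.2.2),
        fun i j => destValue_le_length mu (S.1 i j), S.2.1.wt_dmap hsum⟩
      left_inv := fun T => Subtype.ext (T.2.1.dmap_stdize T.2.2.2 T.2.2.1)
      right_inv := fun S => Subtype.ext (S.2.1.stdize_dmap hsum (hdes S.2.2)) }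

end QC
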